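/- arXiv:hep-th/0610176 — 4 statements merged into one kernel-verified Lean document; each statement's English description precedes it below -/
import Mathlib

section
/- For every integer B ≥ 1, the space Rat_B of based rational maps of degree B is path-connected. -/
open Polynomial

/-- The monic polynomial of degree `B` with non-leading coefficient tuple `a`,
`X^B + a_{B-1} X^{B-1} + ⋯ + a_0`. -/
noncomputable def polyOf (B : ℕ) (a : Fin B → ℂ) : Polynomial ℂ :=
  X ^ B + ∑ i : Fin B, C (a i) * X ^ (i : ℕ)

/-- The space `Rat_B` of based rational maps of degree `B`: pairs `(p, q)` of monic
complex polynomials of degree `B` with no common root, identified with the tuples of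
their non-leading coefficients and topologized as a subspace of `ℂ^B × ℂ^B`. -/
abbrev RatSpace (B : ℕ) : Type :=
  {pq : (Fin B → ℂ) × (Fin B → ℂ) //
    ∀ z : ℂ, ¬((polyOf B pq.1).eval z = 0 ∧ (polyOf B pq.2).eval z = 0)}

lemma polyOf_eval (B : ℕ) (a : Fin B → ℂ) (z : ℂ) :
    (polyOf B a).eval z = z ^ B + ∑ i : Fin B, a i * z ^ (i : ℕ) := by
  simp [polyOf, eval_finset_sum]

/-- Coefficient tuple of the basepoint numerator `X^B - 1`. -/
def baseNum (B : ℕ) : Fin B → ℂ := fun i => if (i : ℕ) = 0 then -1 else 0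

/-- Coefficient tuple of the basepoint denominator `X^B + 1`. -/
def baseDen (B : ℕ) : Fin B → ℂ := fun i => if (i : ℕ) = 0 then 1 else 0

lemma base_sum (B : ℕ) (c z : ℂ) :
    ∑ i : Fin B, (if (i : ℕ) = 0 then c else 0) * z ^ (i : ℕ)
      = if B = 0 then 0 else c := by
  rcases Nat.eq_zero_or_pos B with h | h
  · subst h; simp
  · haveI : NeZero B := ⟨Nat.pos_iff_ne_zero.mp h⟩
    rw [if_neg (Nat.pos_iff_ne_zero.mp h)]
    rw [Finset.sum_eq_single (0 : Fin B)]
    · simp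
    · intro b _ hb
      rw [if_neg, zero_mul]
      intro h'; apply hb; ext; simp [h']
    · simp

/-- The basepoint `(p₀, q₀) = (X^B - 1, X^B + 1)` of `Rat_B`. -/
noncomputable def basePt (B : ℕ) : RatSpace B := by
  refine ⟨(baseNum B, baseDen B), fun z hz => ?_⟩
  obtain ⟨h1, h2⟩ := hz
  rw [polyOf_eval] at h1 h2
  unfold baseNum at h1
  unfold baseDen at h2
  rw [base_sum] at h1 h2
  rcases Nat.eq_zero_or_pos B with h | h
  · subst h; simp at h1
  · rw [if_neg (Nat.pos_iff_ne_zero.mp h)] at h1 h2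
    have : (2 : ℂ) = 0 := by linear_combination h2 - h1
    norm_num at this

lemma polyOf_ne_zero {B : ℕ} (a : Fin B → ℂ) : polyOf B a ≠ 0 := by
  intro h
  have hc : (polyOf B a).coeff B = 1 := by
    rw [polyOf, coeff_add, coeff_X_pow, finset_sum_coeff]
    have : ∀ i : Fin B, (C (a i) * X ^ (i : ℕ)).coeff B = 0 := by
      intro i
      rw [coeff_C_mul, coeff_X_pow, if_neg (by omega : B ≠ (i : ℕ)), mul_zero]
    simp [this]
  rw [h] at hc
  simp at hc

/-- Add the constant `c` to a coefficient tuple (i.e. to the polynomial). -/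
noncomputable def addC (B : ℕ) (u : Fin B → ℂ) (c : ℂ) : Fin B → ℂ :=
  fun i => u i + c * baseDen B i

@[fun_prop]
lemma addC_continuous {B : ℕ} {X : Type*} [TopologicalSpace X]
    {u : X → Fin B → ℂ} {c : X → ℂ} (hu : Continuous u) (hc : Continuous c) :
    Continuous fun x => addC B (u x) (c x) := by
  unfold addC
  exact continuous_pi fun i => ((continuous_pi_iff.mp hu) i).add (hc.mul continuous_const)

lemma eval_addC {B : ℕ} (hB : B ≠ 0) (u : Fin B → ℂ) (c z : ℂ) :
    (polyOf B (addC B u c)).eval z = (polyOf B u).eval z + c := by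
  rw [polyOf_eval, polyOf_eval]
  have h := base_sum B c z
  rw [if_neg hB] at h
  have : ∀ i ∈ Finset.univ, addC B u c i * z ^ (i : ℕ)
      = u i * z ^ (i : ℕ) + (if (i : ℕ) = 0 then c else 0) * z ^ (i : ℕ) := by
    intro i _
    simp only [addC, baseDen]
    split_ifs <;> ring
  rw [Finset.sum_congr rfl this, Finset.sum_add_distrib, h]
  ring

lemma eval_interp {B : ℕ} (u v : Fin B → ℂ) (s z : ℂ) :
    (polyOf B (fun i => u i + s * (v i - u i))).eval z
      = (polyOf B u).eval z + s * ((polyOf B v).eval z - (polyOf B u).eval z) := by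
  rw [polyOf_eval, polyOf_eval, polyOf_eval]
  have : ∀ i ∈ Finset.univ, (u i + s * (v i - u i)) * z ^ (i : ℕ)
      = u i * z ^ (i : ℕ) + s * (v i * z ^ (i : ℕ)) - s * (u i * z ^ (i : ℕ)) := by
    intro i _; ring
  rw [Finset.sum_congr rfl this, Finset.sum_sub_distrib, Finset.sum_add_distrib,
    ← Finset.mul_sum, ← Finset.mul_sum]
  ring

open unitInterval in
/-- Package a continuous family of valid coefficient pairs into a `Joined` statement. -/
lemma joined_mk {B : ℕ} (x y : RatSpace B)
    (f : I → (Fin B → ℂ) × (Fin B → ℂ)) (hf : Continuous f)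
    (hmem : ∀ t, ∀ z : ℂ, ¬((polyOf B (f t).1).eval z = 0 ∧ (polyOf B (f t).2).eval z = 0))
    (h0 : f 0 = x.1) (h1 : f 1 = y.1) : Joined x y :=
  ⟨{ toFun := fun t => ⟨f t, hmem t⟩
     continuous_toFun := hf.subtype_mk _
     source' := Subtype.ext h0
     target' := Subtype.ext h1 }⟩

/-- For every integer `B ≥ 1`, the space `Rat_B` of based rational
maps of degree `B` is path-connected. -/
theorem ratSpace_pathConnected (B : ℕ) (hB : 1 ≤ B) :
    PathConnectedSpace (RatSpace B) := by
  have hB0 : B ≠ 0 := by omega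
  have key : ∀ x : RatSpace B, Joined x (basePt B) := by
    rintro ⟨⟨a, b⟩, hab⟩
    -- the intermediate points
    have hy₁ : ∀ z : ℂ, ¬((polyOf B a).eval z = 0 ∧ (polyOf B (addC B a 1)).eval z = 0) := by
      rintro z ⟨h1, h2⟩
      rw [eval_addC hB0, h1] at h2
      norm_num at h2
    have hy₂ : ∀ z : ℂ, ¬((polyOf B (baseNum B)).eval z = 0 ∧
        (polyOf B (addC B (baseNum B) 1)).eval z = 0) := by
      rintro z ⟨h1, h2⟩
      rw [eval_addC hB0, h1] at h2
      norm_num at h2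
    set y₁ : RatSpace B := ⟨(a, addC B a 1), by rintro z ⟨h1, h2⟩; exact hy₁ z ⟨h1, h2⟩⟩
    set y₂ : RatSpace B := ⟨(baseNum B, addC B (baseNum B) 1),
      by rintro z ⟨h1, h2⟩; exact hy₂ z ⟨h1, h2⟩⟩
    -- Piece A : join x to y₁, moving the second coordinate.
    have pieceA : Joined (⟨(a, b), hab⟩ : RatSpace B) y₁ := by
      set T : Set ℂ :=
        {s | ∃ z : ℂ, (polyOf B a).IsRoot z ∧ 1 + s * ((polyOf B b).eval z - 1) = 0} with hT
      have hTsub : T ⊆ (fun z => (1 - (polyOf B b).eval z)⁻¹) '' {z | (polyOf B a).IsRoot z} := by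
        rintro s ⟨z, hz, he⟩
        refine ⟨z, hz, ?_⟩
        have hmul : (1 - (polyOf B b).eval z) * s = 1 := by linear_combination -he
        have hne : 1 - (polyOf B b).eval z ≠ 0 := left_ne_zero_of_mul_eq_one hmul
        field_simp
        linear_combination -hmul
      have hTc : T.Countable :=
        Set.Countable.mono hTsub
          (((finite_setOf_isRoot (polyOf_ne_zero a)).image _).countable)
      have hpc : IsPathConnected Tᶜ := by
        refine hTc.isPathConnected_compl_of_one_lt_rank ?_
        rw [Complex.rank_real_complex]
        norm_num
      have h1T : (1 : ℂ) ∈ Tᶜ := by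
        rintro ⟨z, hz, he⟩
        exact hab z ⟨hz, by linear_combination he⟩
      have h0T : (0 : ℂ) ∈ Tᶜ := by
        rintro ⟨z, hz, he⟩
        norm_num at he
      obtain ⟨γ, hγ⟩ := hpc.joinedIn 1 h1T 0 h0T
      refine joined_mk _ _
        (fun t => (a, fun i => addC B a 1 i + γ t * (b i - addC B a 1 i))) ?_ ?_ ?_ ?_
      · simp only [addC]
        fun_prop
      · rintro t z ⟨h1, h2⟩
        rw [eval_interp, eval_addC hB0, h1, zero_add] at h2
        have : γ t ∈ T := ⟨z, h1, by linear_combination h2⟩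
        exact hγ t this
      · refine Prod.ext rfl ?_
        funext i
        show addC B a 1 i + γ 0 * (b i - addC B a 1 i) = b i
        rw [γ.source]
        ring
      · refine Prod.ext rfl ?_
        funext i
        show addC B a 1 i + γ 1 * (b i - addC B a 1 i) = addC B a 1 i
        rw [γ.target]
        ring
    -- Piece B : join y₁ to y₂, moving the first coordinate with constant difference 1.
    have pieceB : Joined y₁ y₂ := by
      refine joined_mk _ _
        (fun t => (fun i => a i + ((t : ℝ) : ℂ) * (baseNum B i - a i),
          addC B (fun i => a i + ((t : ℝ) : ℂ) * (baseNum B i - a i)) 1)) ?_ ?_ ?_ ?_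
      · fun_prop
      · rintro t z ⟨h1, h2⟩
        rw [eval_addC hB0, h1] at h2
        norm_num at h2
      · have h : (fun i => a i + ((((0 : unitInterval) : ℝ)) : ℂ) * (baseNum B i - a i)) = a := by
          funext i; norm_num
        show ((fun i => a i + ((((0 : unitInterval) : ℝ)) : ℂ) * (baseNum B i - a i),
          addC B (fun i => a i + ((((0 : unitInterval) : ℝ)) : ℂ) * (baseNum B i - a i)) 1) :
            (Fin B → ℂ) × (Fin B → ℂ)) = _
        rw [h]
      · have h : (fun i => a i + ((((1 : unitInterval) : ℝ)) : ℂ) * (baseNum B i - a i))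
            = baseNum B := by
          funext i; norm_num
        show ((fun i => a i + ((((1 : unitInterval) : ℝ)) : ℂ) * (baseNum B i - a i),
          addC B (fun i => a i + ((((1 : unitInterval) : ℝ)) : ℂ) * (baseNum B i - a i)) 1) :
            (Fin B → ℂ) × (Fin B → ℂ)) = _
        rw [h]
    -- Piece C : join y₂ to the basepoint, moving the constant from 1 to 2.
    have pieceC : Joined y₂ (basePt B) := by
      refine joined_mk _ _
        (fun t => (baseNum B, addC B (baseNum B) (1 + ((t : ℝ) : ℂ)))) ?_ ?_ ?_ ?_
      · fun_prop
      · rintro t z ⟨h1, h2⟩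
        rw [eval_addC hB0, h1, zero_add] at h2
        have ht : (0 : ℝ) ≤ (t : ℝ) := t.2.1
        have : (1 : ℝ) + (t : ℝ) = 0 := by exact_mod_cast h2
        linarith
      · refine Prod.ext rfl ?_
        show addC B (baseNum B) (1 + ((((0 : unitInterval) : ℝ)) : ℂ)) = addC B (baseNum B) 1
        norm_num
      · refine Prod.ext rfl ?_
        show addC B (baseNum B) (1 + ((((1 : unitInterval) : ℝ)) : ℂ)) = baseDen B
        funext i
        simp only [addC, baseNum, baseDen]
        split_ifs <;> norm_num
    exact (pieceA.trans pieceB).trans pieceC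
  exact ⟨⟨basePt B⟩, fun x y => (key x).trans (key y).symm⟩
end

section
/- Let B ≥ 1 and suppose H : [0,1] × [0,Φ] → ℂ^B × ℂ^B is continuous, writing H(s,φ) = (z_1(s,φ),…,z_B(s,φ), p_1(s,φ),…,p_B(s,φ)), such that for every s ∈ [0,1] the curves φ ↦ z_i(s,φ), φ ↦ p_j(s,φ) are C¹ in φ and form a closed configuration of B zeros and B poles (z_i(s,φ) ≠ p_j(s,φ) for all i,j,φ, with the initial and final multisets of zeros agreeing and the initial and final multisets of poles agreeing). Then the integer N(L_s) = (i/2π) ∑_{i,j=1}^{B} ∫_0^Φ (∂_φ z_i(s,φ) − ∂_φ p_j(s,φ))/(z_i(s,φ) − p_j(s,φ)) dφ is independent of s; in particular N(L_0) = N(L_1). -/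
open scoped Real

/-!
The summed integrand is the logarithmic derivative in `φ` of
`W_s(φ) = ∏_{i,j} (z_i(s,φ) - p_j(s,φ))`, and `W_s(Φ) = W_s(0)` because this product only
depends on the multisets of zeros and poles. By compactness `|W|` is bounded below and `W` is
uniformly continuous, so for `s` close to `s₀` the ratio `W_s / W_{s₀}` stays within distance `1`
of `1`. Then `log (W_s / W_{s₀})` is a primitive of the difference of the two integrands, and
periodicity makes the difference of the integrals vanish. A locally constant function on the
connected parameter interval is constant.
-/

open Set Complex intervalIntegral MeasureTheory

theorem Finset.prod_prod_eq_of_multiset_map_eq {ι κ α β M : Type*} [Fintype ι] [Fintype κ]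
    [CommMonoid M] (g : α → β → M) {z z₁ : ι → α} {p p₁ : κ → β}
    (hz : Finset.univ.val.map z = Finset.univ.val.map z₁)
    (hp : Finset.univ.val.map p = Finset.univ.val.map p₁) :
    ∏ i, ∏ j, g (z i) (p j) = ∏ i, ∏ j, g (z₁ i) (p₁ j) := by
  have h : ∀ (z : ι → α) (p : κ → β), ∏ i, ∏ j, g (z i) (p j)
      = ((Finset.univ.val.map z).map fun a => ((Finset.univ.val.map p).map (g a)).prod).prod := by
    intro z p
    simp only [Finset.prod_eq_multiset_prod, Multiset.map_map, Function.comp_def]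
  rw [h, h, hz, hp]

section Deriv

variable {𝕜 : Type*} [NontriviallyNormedField 𝕜] {x : 𝕜}

theorem HasDerivAt.fun_finsetProd_eq_mul_sum {ι 𝔸 : Type*} [NormedCommRing 𝔸]
    [NormedAlgebra 𝕜 𝔸] {u : Finset ι} {f : ι → 𝕜 → 𝔸} {L : ι → 𝔸}
    (hf : ∀ k ∈ u, HasDerivAt (f k) (f k x * L k) x) :
    HasDerivAt (∏ k ∈ u, f k ·) ((∏ k ∈ u, f k x) * ∑ k ∈ u, L k) x := by
  classical
  refine (HasDerivAt.fun_finsetProd hf).congr_deriv ?_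
  rw [Finset.mul_sum]
  refine Finset.sum_congr rfl fun k hk => ?_
  rw [smul_eq_mul, ← mul_assoc, Finset.prod_erase_mul _ _ hk]

theorem HasDerivAt.prod_prod_sub {ι κ 𝔽 : Type*} [Fintype ι] [Fintype κ] [NormedField 𝔽]
    [NormedAlgebra 𝕜 𝔽] {z : ι → 𝕜 → 𝔽} {p : κ → 𝕜 → 𝔽} {z' : ι → 𝔽} {p' : κ → 𝔽}
    (hz : ∀ i, HasDerivAt (z i) (z' i) x) (hp : ∀ j, HasDerivAt (p j) (p' j) x)
    (hne : ∀ i j, z i x ≠ p j x) :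
    HasDerivAt (fun y => ∏ i, ∏ j, (z i y - p j y))
      ((∏ i, ∏ j, (z i x - p j x)) * ∑ i, ∑ j, (z' i - p' j) / (z i x - p j x)) x := by
  refine HasDerivAt.fun_finsetProd_eq_mul_sum fun i _ =>
    HasDerivAt.fun_finsetProd_eq_mul_sum fun j _ => ((hz i).sub (hp j)).congr_deriv ?_
  rw [mul_div_cancel₀ _ (sub_ne_zero.mpr (hne i j))]

end Deriv

theorem exists_pos_forall_dist_lt_div_mem_slitPlane {X : Type*} [PseudoMetricSpace X]
    {K : Set X} (hK : IsCompact K) {F : X → ℂ} (hF : ContinuousOn F K)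
    (hF0 : ∀ x ∈ K, F x ≠ 0) :
    ∃ δ > 0, ∀ x ∈ K, ∀ y ∈ K, dist x y < δ → F x / F y ∈ slitPlane := by
  obtain ⟨m, hm, hmF⟩ := hK.exists_forall_le' hF.norm fun x hx => norm_pos_iff.mpr (hF0 x hx)
  obtain ⟨δ, hδ, hFδ⟩ := Metric.uniformContinuousOn_iff.mp
    (hK.uniformContinuousOn_of_continuous hF) m hm
  refine ⟨δ, hδ, fun x hx y hy hxy => ?_⟩
  have hy0 := hF0 y hy
  have hsplit : F x / F y = 1 + (F x - F y) / F y := by field_simp; ring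
  rw [hsplit]
  refine mem_slitPlane_of_norm_lt_one ?_
  rw [norm_div, div_lt_one (norm_pos_iff.mpr hy0), ← dist_eq_norm]
  exact (hFδ x hx y hy hxy).trans_le (hmF y hy)

theorem integral_sub_integral_eq_log_div {f g L M : ℝ → ℂ} {a b : ℝ}
    (hf : ∀ x ∈ uIcc a b, HasDerivAt f (f x * L x) x)
    (hg : ∀ x ∈ uIcc a b, HasDerivAt g (g x * M x) x)
    (hfg : ∀ x ∈ uIcc a b, f x / g x ∈ slitPlane)
    (hL : IntervalIntegrable L volume a b) (hM : IntervalIntegrable M volume a b) :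
    (∫ x in a..b, L x) - ∫ x in a..b, M x = log (f b / g b) - log (f a / g a) := by
  rw [← integral_sub hL hM]
  refine integral_eq_sub_of_hasDerivAt (f := fun x => log (f x / g x)) (fun x hx => ?_) (hL.sub hM)
  have hfg0 : f x / g x ≠ 0 := slitPlane_ne_zero (hfg x hx)
  have hg0 : g x ≠ 0 := fun h => hfg0 (by rw [h, div_zero])
  have hf0 : f x ≠ 0 := fun h => hfg0 (by rw [h, zero_div])
  refine (((hf x hx).div (hg x hx) hg0).clog_real (hfg x hx)).congr_deriv ?_
  rw [Pi.div_apply]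
  field_simp

theorem integral_eq_of_homotopy {X : Type*} [PseudoMetricSpace X] {S : Set X}
    (hSc : IsCompact S) (hSp : IsPreconnected S) {a b : ℝ} {W L : X → ℝ → ℂ}
    (hWc : ContinuousOn (fun q : X × ℝ => W q.1 q.2) (S ×ˢ uIcc a b))
    (hW0 : ∀ s ∈ S, ∀ x ∈ uIcc a b, W s x ≠ 0)
    (hW' : ∀ s ∈ S, ∀ x ∈ uIcc a b, HasDerivAt (W s) (W s x * L s x) x)
    (hWper : ∀ s ∈ S, W s b = W s a) (hL : ∀ s ∈ S, IntervalIntegrable (L s) volume a b)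
    {s₁ s₂ : X} (hs₁ : s₁ ∈ S) (hs₂ : s₂ ∈ S) :
    ∫ x in a..b, L s₁ x = ∫ x in a..b, L s₂ x := by
  obtain ⟨δ, hδ, hslit⟩ := exists_pos_forall_dist_lt_div_mem_slitPlane
    (hSc.prod isCompact_uIcc) hWc fun q hq => hW0 q.1 hq.1 q.2 hq.2
  have hnear : ∀ s ∈ S, ∀ t ∈ S, dist t s < δ →
      ∫ x in a..b, L t x = ∫ x in a..b, L s x := by
    intro s hs t ht hts
    have hratio : ∀ x ∈ uIcc a b, W t x / W s x ∈ slitPlane := fun x hx =>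
      hslit (t, x) ⟨ht, hx⟩ (s, x) ⟨hs, hx⟩ (by simpa [Prod.dist_eq] using hts)
    have h := integral_sub_integral_eq_log_div (hW' t ht) (hW' s hs) hratio (hL t ht) (hL s hs)
    rwa [hWper t ht, hWper s hs, sub_self, sub_eq_zero] at h
  refine hSp.induction₂ (fun s t => ∫ x in a..b, L s x = ∫ x in a..b, L t x)
    (fun s hs => ?_) (fun _ _ _ _ _ _ => Eq.trans) (fun _ _ _ _ => Eq.symm) hs₁ hs₂
  filter_upwards [self_mem_nhdsWithin, mem_nhdsWithin_of_mem_nhds (Metric.ball_mem_nhds s hδ)]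
    with t ht hts
  exact (hnear s hs t ht hts).symm

theorem ContinuousOn.div_sub_of_hasDerivAt {z p z' p' : ℝ → ℂ} {T : Set ℝ}
    (hz : ∀ x ∈ T, HasDerivAt z (z' x) x) (hp : ∀ x ∈ T, HasDerivAt p (p' x) x)
    (hz' : ContinuousOn z' T) (hp' : ContinuousOn p' T) (hne : ∀ x ∈ T, z x ≠ p x) :
    ContinuousOn (fun x => (z' x - p' x) / (z x - p x)) T :=
  (hz'.sub hp').div (fun x hx => ((hz x hx).sub (hp x hx)).continuousAt.continuousWithinAt)
    fun x hx => sub_ne_zero.mpr (hne x hx)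

theorem sum_sum_integral_div_sub_eq_of_homotopy {X ι κ : Type*} [PseudoMetricSpace X]
    [Fintype ι] [Fintype κ] {S : Set X} (hSc : IsCompact S) (hSp : IsPreconnected S)
    {a b : ℝ} {z z' : ι → X → ℝ → ℂ} {p p' : κ → X → ℝ → ℂ}
    (hzc : ∀ i, ContinuousOn (fun q : X × ℝ => z i q.1 q.2) (S ×ˢ uIcc a b))
    (hpc : ∀ j, ContinuousOn (fun q : X × ℝ => p j q.1 q.2) (S ×ˢ uIcc a b))
    (hz : ∀ i, ∀ s ∈ S, ∀ x ∈ uIcc a b, HasDerivAt (z i s) (z' i s x) x)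
    (hp : ∀ j, ∀ s ∈ S, ∀ x ∈ uIcc a b, HasDerivAt (p j s) (p' j s x) x)
    (hz' : ∀ i, ∀ s ∈ S, ContinuousOn (z' i s) (uIcc a b))
    (hp' : ∀ j, ∀ s ∈ S, ContinuousOn (p' j s) (uIcc a b))
    (hne : ∀ i j, ∀ s ∈ S, ∀ x ∈ uIcc a b, z i s x ≠ p j s x)
    (hzper : ∀ s ∈ S,
      Finset.univ.val.map (fun i => z i s b) = Finset.univ.val.map (fun i => z i s a))
    (hpper : ∀ s ∈ S,
      Finset.univ.val.map (fun j => p j s b) = Finset.univ.val.map (fun j => p j s a))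
    {s₁ s₂ : X} (hs₁ : s₁ ∈ S) (hs₂ : s₂ ∈ S) :
    ∑ i, ∑ j, ∫ x in a..b, (z' i s₁ x - p' j s₁ x) / (z i s₁ x - p j s₁ x)
      = ∑ i, ∑ j, ∫ x in a..b, (z' i s₂ x - p' j s₂ x) / (z i s₂ x - p j s₂ x) := by
  have hquot : ∀ s ∈ S, ∀ i j, ContinuousOn
      (fun x => (z' i s x - p' j s x) / (z i s x - p j s x)) (uIcc a b) := fun s hs i j =>
    .div_sub_of_hasDerivAt (hz i s hs) (hp j s hs) (hz' i s hs) (hp' j s hs) (hne i j s hs)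
  have hswap : ∀ s ∈ S, ∑ i, ∑ j, ∫ x in a..b, (z' i s x - p' j s x) / (z i s x - p j s x)
      = ∫ x in a..b, ∑ i, ∑ j, (z' i s x - p' j s x) / (z i s x - p j s x) := by
    intro s hs
    rw [integral_finsetSum fun i _ =>
      (continuousOn_finsetSum _ fun j _ => hquot s hs i j).intervalIntegrable]
    exact Finset.sum_congr rfl fun i _ =>
      (integral_finsetSum fun j _ => (hquot s hs i j).intervalIntegrable).symm
  rw [hswap s₁ hs₁, hswap s₂ hs₂]
  refine integral_eq_of_homotopy (W := fun s x => ∏ i, ∏ j, (z i s x - p j s x))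
    (L := fun s x => ∑ i, ∑ j, (z' i s x - p' j s x) / (z i s x - p j s x))
    hSc hSp ?_ ?_ ?_ ?_ ?_ hs₁ hs₂
  · exact continuousOn_finsetProd _ fun i _ =>
      continuousOn_finsetProd _ fun j _ => (hzc i).sub (hpc j)
  · exact fun s hs x hx => Finset.prod_ne_zero_iff.mpr fun i _ =>
      Finset.prod_ne_zero_iff.mpr fun j _ => sub_ne_zero.mpr (hne i j s hs x hx)
  · exact fun s hs x hx => HasDerivAt.prod_prod_sub (fun i => hz i s hs x hx)
      (fun j => hp j s hs x hx) fun i j => hne i j s hs x hx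
  · exact fun s hs => Finset.prod_prod_eq_of_multiset_map_eq _ (hzper s hs) (hpper s hs)
  · exact fun s hs => (continuousOn_finsetSum _ fun i _ =>
      continuousOn_finsetSum _ fun j _ => hquot s hs i j).intervalIntegrable

theorem N_homotopy_invariant_general
    (B : ℕ) (Φ : ℝ) (hΦ : 0 ≤ Φ)
    (z p z' p' : Fin B → ℝ → ℝ → ℂ)
    (hzc : ∀ i, ContinuousOn (fun sφ : ℝ × ℝ => z i sφ.1 sφ.2)
      (Set.Icc 0 1 ×ˢ Set.Icc 0 Φ))
    (hpc : ∀ j, ContinuousOn (fun sφ : ℝ × ℝ => p j sφ.1 sφ.2)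
      (Set.Icc 0 1 ×ˢ Set.Icc 0 Φ))
    (hz : ∀ i, ∀ s ∈ Set.Icc (0:ℝ) 1, ∀ φ ∈ Set.Icc 0 Φ,
      HasDerivAt (z i s) (z' i s φ) φ)
    (hp : ∀ j, ∀ s ∈ Set.Icc (0:ℝ) 1, ∀ φ ∈ Set.Icc 0 Φ,
      HasDerivAt (p j s) (p' j s φ) φ)
    (hz' : ∀ i, ∀ s ∈ Set.Icc (0:ℝ) 1, ContinuousOn (z' i s) (Set.Icc 0 Φ))
    (hp' : ∀ j, ∀ s ∈ Set.Icc (0:ℝ) 1, ContinuousOn (p' j s) (Set.Icc 0 Φ))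
    (hne : ∀ i j, ∀ s ∈ Set.Icc (0:ℝ) 1, ∀ φ ∈ Set.Icc 0 Φ, z i s φ ≠ p j s φ)
    (hzper : ∀ s ∈ Set.Icc (0:ℝ) 1,
      Multiset.map (fun i => z i s Φ) Finset.univ.val
        = Multiset.map (fun i => z i s 0) Finset.univ.val)
    (hpper : ∀ s ∈ Set.Icc (0:ℝ) 1,
      Multiset.map (fun j => p j s Φ) Finset.univ.val
        = Multiset.map (fun j => p j s 0) Finset.univ.val) :
    ∀ s₁ ∈ Set.Icc (0:ℝ) 1, ∀ s₂ ∈ Set.Icc (0:ℝ) 1,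
      Complex.I / (2 * π) *
          ∑ i : Fin B, ∑ j : Fin B,
            ∫ φ in (0:ℝ)..Φ, (z' i s₁ φ - p' j s₁ φ) / (z i s₁ φ - p j s₁ φ)
        = Complex.I / (2 * π) *
            ∑ i : Fin B, ∑ j : Fin B,
              ∫ φ in (0:ℝ)..Φ, (z' i s₂ φ - p' j s₂ φ) / (z i s₂ φ - p j s₂ φ) := by
  intro s₁ hs₁ s₂ hs₂
  rw [← uIcc_of_le hΦ] at hzc hpc hz hp hz' hp' hne
  congr 1
  exact sum_sum_integral_div_sub_eq_of_homotopy isCompact_Icc isPreconnected_Icc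
    hzc hpc hz hp hz' hp' hne hzper hpper hs₁ hs₂

/-- Given a continuous family (over `s ∈ [0,1]`) of closed
configurations of `B` zeros and `B` poles on `[0,Φ]`, each C¹ in `φ`, the integer
`N(L_s) = (i/2π) ∑_{i,j} ∫_0^Φ (∂_φ z_i - ∂_φ p_j)/(z_i - p_j) dφ` is independent
of `s`; in particular `N(L_0) = N(L_1)`. -/
theorem N_homotopy_invariant
    (B : ℕ) (hB : 1 ≤ B) (Φ : ℝ) (hΦ : 0 ≤ Φ)
    (z p z' p' : Fin B → ℝ → ℝ → ℂ)
    (hzc : ∀ i, ContinuousOn (fun sφ : ℝ × ℝ => z i sφ.1 sφ.2)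
      (Set.Icc 0 1 ×ˢ Set.Icc 0 Φ))
    (hpc : ∀ j, ContinuousOn (fun sφ : ℝ × ℝ => p j sφ.1 sφ.2)
      (Set.Icc 0 1 ×ˢ Set.Icc 0 Φ))
    (hz : ∀ i, ∀ s ∈ Set.Icc (0:ℝ) 1, ∀ φ ∈ Set.Icc 0 Φ,
      HasDerivAt (z i s) (z' i s φ) φ)
    (hp : ∀ j, ∀ s ∈ Set.Icc (0:ℝ) 1, ∀ φ ∈ Set.Icc 0 Φ,
      HasDerivAt (p j s) (p' j s φ) φ)
    (hz' : ∀ i, ∀ s ∈ Set.Icc (0:ℝ) 1, ContinuousOn (z' i s) (Set.Icc 0 Φ))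
    (hp' : ∀ j, ∀ s ∈ Set.Icc (0:ℝ) 1, ContinuousOn (p' j s) (Set.Icc 0 Φ))
    (hne : ∀ i j, ∀ s ∈ Set.Icc (0:ℝ) 1, ∀ φ ∈ Set.Icc 0 Φ, z i s φ ≠ p j s φ)
    (hzper : ∀ s ∈ Set.Icc (0:ℝ) 1,
      Multiset.map (fun i => z i s Φ) Finset.univ.val
        = Multiset.map (fun i => z i s 0) Finset.univ.val)
    (hpper : ∀ s ∈ Set.Icc (0:ℝ) 1,
      Multiset.map (fun j => p j s Φ) Finset.univ.val
        = Multiset.map (fun j => p j s 0) Finset.univ.val) :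
    ∀ s₁ ∈ Set.Icc (0:ℝ) 1, ∀ s₂ ∈ Set.Icc (0:ℝ) 1,
      Complex.I / (2 * π) *
          ∑ i : Fin B, ∑ j : Fin B,
            ∫ φ in (0:ℝ)..Φ, (z' i s₁ φ - p' j s₁ φ) / (z i s₁ φ - p j s₁ φ)
        = Complex.I / (2 * π) *
            ∑ i : Fin B, ∑ j : Fin B,
              ∫ φ in (0:ℝ)..Φ, (z' i s₂ φ - p' j s₂ φ) / (z i s₂ φ - p j s₂ φ) :=
  N_homotopy_invariant_general B Φ hΦ z p z' p' hzc hpc hz hp hz' hp' hne hzper hpper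
end

section
/- Let B ≥ 1, let (p,q) ∈ Rat_B, and let α, β ∈ ℝ. For t ∈ [0,1] define p_t(z) = e^{it(β/2 − Bα)} ( cos(tβ/2)·p(e^{itα}z) − i sin(tβ/2)·q(e^{itα}z) ) and q_t(z) = e^{it(β/2 − Bα)} ( −i sin(tβ/2)·p(e^{itα}z) + cos(tβ/2)·q(e^{itα}z) ). Then for every t, (p_t, q_t) is a pair of monic degree-B polynomials with Res(p_t, q_t) = e^{−itB(Bα−β)}·Res(p,q); in particular Res(p_t,q_t) ≠ 0, so (p_t,q_t) ∈ Rat_B for all t ∈ [0,1]. If moreover (p,q) has the (α,β)-symmetry, then (p_1, q_1) = (p, q), so t ↦ (p_t,q_t) is a loop in Rat_B based at (p,q) along which the resultant traverses the curve t ↦ e^{−itB(Bα−β)}·Res(p,q). -/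
open Polynomial Complex
open scoped Real

/-- The resultant `Res(p,q) = ∏_{i,j} (z_i - p_j)` of two monic polynomials, written as
`∏_i q(z_i)` over the roots `z_i` of `p` (with multiplicity). -/
noncomputable def res (p q : Polynomial ℂ) : ℂ :=
  (p.roots.map fun z => q.eval z).prod

/-- `p_t(z) = e^{it(β/2 - Bα)} ( cos(tβ/2)·p(e^{itα}z) - i sin(tβ/2)·q(e^{itα}z) )`. -/
noncomputable def rotNum (B : ℕ) (α β : ℝ) (p q : Polynomial ℂ) (t : ℝ) : Polynomial ℂ :=
  C (exp (I * t * (β / 2 - B * α))) *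
    (C (Real.cos (t * β / 2) : ℂ) * p.comp (C (exp (I * t * α)) * X) -
      C (I * Real.sin (t * β / 2)) * q.comp (C (exp (I * t * α)) * X))

/-- `q_t(z) = e^{it(β/2 - Bα)} ( -i sin(tβ/2)·p(e^{itα}z) + cos(tβ/2)·q(e^{itα}z) )`. -/
noncomputable def rotDen (B : ℕ) (α β : ℝ) (p q : Polynomial ℂ) (t : ℝ) : Polynomial ℂ :=
  C (exp (I * t * (β / 2 - B * α))) *
    (-(C (I * Real.sin (t * β / 2)) * p.comp (C (exp (I * t * α)) * X)) +
      C (Real.cos (t * β / 2) : ℂ) * q.comp (C (exp (I * t * α)) * X))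

/-- `(p,q)` has the `(α,β)`-symmetry: `R(e^{iα} z) = M_β(R(z))` for `R = p/q`, where
`M_β` is the Möbius rotation by `β` about the `X`-axis. -/
def RotSymm (α β : ℝ) (p q : Polynomial ℂ) : Prop :=
  ∀ z : ℂ,
    p.eval (exp (I * α) * z) *
        (I * Real.sin (β / 2) * p.eval z + (Real.cos (β / 2) : ℂ) * q.eval z) =
      q.eval (exp (I * α) * z) *
        ((Real.cos (β / 2) : ℂ) * p.eval z + I * Real.sin (β / 2) * q.eval z)

lemma card_roots_eq (f : Polynomial ℂ) : Multiset.card f.roots = f.natDegree :=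
  (Polynomial.splits_iff_card_roots).mp (IsAlgClosed.splits f)

lemma prod_map_const_mul {M : Type*} [CommMonoid M] (s : Multiset ℂ) (c : M) (f : ℂ → M) :
    (s.map fun z => c * f z).prod = c ^ (Multiset.card s) * (s.map f).prod := by
  rw [Multiset.prod_map_mul (f := fun _ => c) (g := f), Multiset.map_const',
    Multiset.prod_replicate]

lemma eval_eq_lc_mul (g : Polynomial ℂ) (z : ℂ) :
    g.eval z = g.leadingCoeff * (g.roots.map fun w => z - w).prod := by
  conv_lhs => rw [Splits.eq_prod_roots (IsAlgClosed.splits g)]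
  rw [eval_mul, eval_C, eval_multiset_prod, Multiset.map_map]
  simp [Function.comp]

lemma res_eq (f g : Polynomial ℂ) :
    res f g = g.leadingCoeff ^ f.natDegree *
      (f.roots.map fun z => (g.roots.map fun w => z - w).prod).prod := by
  unfold res
  rw [← card_roots_eq f,
    Multiset.map_congr rfl (fun z _ => eval_eq_lc_mul g z), prod_map_const_mul]

lemma double_prod_swap (s t : Multiset ℂ) :
    (s.map fun z => (t.map fun w => z - w).prod).prod =
      (-1 : ℂ) ^ (Multiset.card s * Multiset.card t) *
        (t.map fun w => (s.map fun z => w - z).prod).prod := by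
  rw [Multiset.prod_map_prod_map]
  have h1 : ∀ w : ℂ, (s.map fun z => z - w).prod
      = (-1 : ℂ) ^ (Multiset.card s) * (s.map fun z => w - z).prod := by
    intro w
    rw [Multiset.map_congr rfl (show ∀ z ∈ s, z - w = (-1) * (w - z) by intros; ring),
      prod_map_const_mul]
  rw [Multiset.map_congr rfl (fun w _ => h1 w), prod_map_const_mul, ← pow_mul,
    mul_comm (Multiset.card s) (Multiset.card t)]

lemma res_swap (f g : Polynomial ℂ) (B : ℕ) (hf : f.natDegree = B) (hg : g.natDegree = B) :
    f.leadingCoeff ^ B * res f g =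
      (-1 : ℂ) ^ (B * B) * (g.leadingCoeff ^ B * res g f) := by
  rw [res_eq f g, res_eq g f, hf, hg, double_prod_swap, card_roots_eq, card_roots_eq, hf, hg]
  ring

lemma comb_deg (u v : Polynomial ℂ) (B : ℕ) (a b L : ℂ)
    (hu : u.natDegree = B) (hv : v.natDegree = B)
    (hlu : u.leadingCoeff = L) (hlv : v.leadingCoeff = L)
    (h : (a + b) * L ≠ 0) :
    (C a * u + C b * v).natDegree = B ∧ (C a * u + C b * v).leadingCoeff = (a + b) * L := by
  have hcu : u.coeff B = L := by rw [← hu, coeff_natDegree, hlu]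
  have hcv : v.coeff B = L := by rw [← hv, coeff_natDegree, hlv]
  have hcoeff : (C a * u + C b * v).coeff B = (a + b) * L := by
    rw [coeff_add, coeff_C_mul, coeff_C_mul, hcu, hcv]; ring
  have hle : (C a * u + C b * v).natDegree ≤ B :=
    le_trans (natDegree_add_le _ _)
      (max_le (le_trans (natDegree_C_mul_le a u) hu.le)
        (le_trans (natDegree_C_mul_le b v) hv.le))
  have hdeg : (C a * u + C b * v).natDegree = B :=
    natDegree_eq_of_le_of_coeff_ne_zero hle (by rw [hcoeff]; exact h)
  exact ⟨hdeg, by rw [Polynomial.leadingCoeff, hdeg, hcoeff]⟩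

lemma res_rot (u v : Polynomial ℂ) (B : ℕ) (L a b : ℂ) (hL : L ≠ 0)
    (hu : u.natDegree = B) (hv : v.natDegree = B)
    (hlu : u.leadingCoeff = L) (hlv : v.leadingCoeff = L)
    (hdet : a ^ 2 - b ^ 2 = 1) :
    res (C a * u - C b * v) (-(C b * u) + C a * v) = (a + b) ^ B * res u v := by
  have hvne : v ≠ 0 := leadingCoeff_ne_zero.mp (by rw [hlv]; exact hL)
  have hcv : Multiset.card v.roots = B := by rw [card_roots_eq, hv]
  have hamb : a - b ≠ 0 := by
    intro h; apply one_ne_zero (α := ℂ)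
    rw [← hdet]; linear_combination (a + b) * h
  have hvu : res v u = (-1 : ℂ) ^ (B * B) * res u v := by
    have h4 := res_swap v u B hv hu
    rw [hlu, hlv] at h4
    exact mul_left_cancel₀ (pow_ne_zero B hL) (by linear_combination h4)
  have hm1 : ((-1 : ℂ) ^ (B * B)) * ((-1 : ℂ) ^ (B * B)) = 1 := by
    rw [← mul_pow]; norm_num
  by_cases ha : a = 0
  · subst ha
    have hb : b ≠ 0 := by intro h; rw [h] at hdet; norm_num at hdet
    have hF : C (0:ℂ) * u - C b * v = C (-b) * v := by
      rw [map_zero, zero_mul, zero_sub, map_neg, neg_mul]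
    have hG : ∀ z : ℂ, (-(C b * u) + C (0:ℂ) * v).eval z = -b * u.eval z := by
      intro z; simp
    have : res (C (0:ℂ) * u - C b * v) (-(C b * u) + C (0:ℂ) * v)
        = (-b) ^ B * res v u := by
      unfold res
      rw [hF, roots_C_mul v (neg_ne_zero.mpr hb),
        Multiset.map_congr rfl (fun z _ => hG z), prod_map_const_mul, hcv]
    rw [this, hvu]
    have heven : Even (B + B * B) := by
      rcases Nat.even_or_odd B with h | h
      · exact h.add (h.mul_right B)
      · exact h.add_odd (h.mul h)
    have : ((-b) ^ B * (-1 : ℂ) ^ (B * B)) = (0 + b) ^ B := by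
      rw [neg_pow, zero_add, mul_comm ((-1:ℂ) ^ B) (b ^ B), mul_assoc, ← pow_add,
        heven.neg_one_pow, mul_one]
    linear_combination res u v * this
  · -- a ≠ 0
    have hCdet : (C a) ^ 2 - (C b) ^ 2 = (1 : Polynomial ℂ) := by
      rw [← C_pow, ← C_pow, ← C_sub, hdet, C_1]
    have key : C a * (-(C b * u) + C a * v) = C (-b) * (C a * u - C b * v) + v := by
      rw [map_neg]; linear_combination v * hCdet
    have hrw : C a * u - C b * v = C a * u + C (-b) * v := by rw [map_neg]; ring
    have hcomb := comb_deg u v B a (-b) L hu hv hlu hlv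
      (by rw [show a + -b = a - b by ring]; exact mul_ne_zero hamb hL)
    have hFdeg : (C a * u - C b * v).natDegree = B := by rw [hrw]; exact hcomb.1
    have hFlc : (C a * u - C b * v).leadingCoeff = (a - b) * L := by
      rw [hrw, hcomb.2]; ring
    have hFne : (C a * u - C b * v) ≠ 0 :=
      leadingCoeff_ne_zero.mp (by rw [hFlc]; exact mul_ne_zero hamb hL)
    have hcF : Multiset.card (C a * u - C b * v).roots = B := by rw [card_roots_eq, hFdeg]
    -- res F G = a⁻¹ ^ B * res F v
    have h1 : res (C a * u - C b * v) (-(C b * u) + C a * v)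
        = a⁻¹ ^ B * res (C a * u - C b * v) v := by
      unfold res
      rw [Multiset.map_congr rfl (show ∀ z ∈ (C a * u - C b * v).roots,
          (-(C b * u) + C a * v).eval z = a⁻¹ * v.eval z by
        intro z hz
        have hz0 : (C a * u - C b * v).eval z = 0 := isRoot_of_mem_roots hz
        have hk := congrArg (Polynomial.eval z) key
        simp only [eval_mul, eval_add, eval_neg, eval_C, eval_sub] at hk hz0 ⊢
        field_simp
        linear_combination hk + (-b) * hz0), prod_map_const_mul, hcF]
    -- res v F = a ^ B * res v u
    have h3 : res v (C a * u - C b * v) = a ^ B * res v u := by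
      unfold res
      rw [Multiset.map_congr rfl (show ∀ w ∈ v.roots,
          (C a * u - C b * v).eval w = a * u.eval w by
        intro w hw
        have hw0 : v.eval w = 0 := isRoot_of_mem_roots hw
        simp [hw0]), prod_map_const_mul, hcv]
    have h2 := res_swap (C a * u - C b * v) v B hFdeg hv
    rw [hFlc, hlv, h3, hvu] at h2
    -- h2 : ((a-b)*L)^B * res F v = (-1)^(B*B) * (L^B * (a^B * ((-1)^(B*B) * res u v)))
    have e1 : (a + b) ^ B * ((a - b) * L) ^ B = L ^ B := by
      rw [← mul_pow, show (a + b) * ((a - b) * L) = L by linear_combination L * hdet]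
    have step : L ^ B * res (C a * u - C b * v) v
        = L ^ B * ((a + b) ^ B * a ^ B * res u v) := by
      calc L ^ B * res (C a * u - C b * v) v
          = (a + b) ^ B * (((a - b) * L) ^ B * res (C a * u - C b * v) v) := by
            rw [← mul_assoc, e1]
        _ = (a + b) ^ B * ((-1:ℂ) ^ (B*B) * (L ^ B * (a ^ B * ((-1:ℂ) ^ (B*B) * res u v)))) := by
            rw [h2]
        _ = L ^ B * ((a + b) ^ B * a ^ B * res u v) := by
            linear_combination ((a + b) ^ B * L ^ B * a ^ B * res u v) * hm1
    have hFv : res (C a * u - C b * v) v = (a + b) ^ B * a ^ B * res u v :=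
      mul_left_cancel₀ (pow_ne_zero B hL) step
    rw [h1, hFv]
    have hainv : a⁻¹ ^ B * a ^ B = 1 := by
      rw [← mul_pow, inv_mul_cancel₀ ha, one_pow]
    linear_combination ((a + b) ^ B * res u v) * hainv

lemma roots_comp_scale (p : Polynomial ℂ) (hp : p.Monic) (c : ℂ) (hc : c ≠ 0) :
    (p.comp (C c * X)).roots = p.roots.map fun z => z / c := by
  conv_lhs => rw [Splits.eq_prod_roots_of_monic (IsAlgClosed.splits p) hp]
  rw [multiset_prod_comp, Multiset.map_map,
    Multiset.map_congr rfl (show ∀ z ∈ p.roots,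
      ((fun f : Polynomial ℂ => f.comp (C c * X)) ∘ fun z => X - C z) z
        = C c * (X - C (z / c)) by
      intro z _
      simp only [Function.comp, sub_comp, X_comp, C_comp]
      rw [mul_sub, ← C_mul, mul_div_cancel₀ z hc]),
    prod_map_const_mul, ← C_pow, roots_C_mul _ (pow_ne_zero _ hc),
    show (p.roots.map fun z => X - C (z / c)) = ((p.roots.map fun z => z / c).map
      fun a => X - C a) by rw [Multiset.map_map]; rfl,
    roots_multiset_prod_X_sub_C]

lemma res_comp_scale (p q : Polynomial ℂ) (hp : p.Monic) (c : ℂ) (hc : c ≠ 0) :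
    res (p.comp (C c * X)) (q.comp (C c * X)) = res p q := by
  unfold res
  rw [roots_comp_scale p hp c hc, Multiset.map_map]
  refine congrArg _ (Multiset.map_congr rfl fun z hz => ?_)
  simp only [Function.comp, eval_comp, eval_mul, eval_C, eval_X]
  rw [mul_comm, div_mul_cancel₀ z hc]

lemma res_ne_zero (p q : Polynomial ℂ)
    (hnoroot : ∀ z : ℂ, ¬(p.eval z = 0 ∧ q.eval z = 0)) : res p q ≠ 0 := by
  refine Multiset.prod_ne_zero fun h => ?_
  rw [Multiset.mem_map] at h
  obtain ⟨z, hz, hq⟩ := h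
  exact hnoroot z ⟨isRoot_of_mem_roots hz, hq⟩

lemma rot_pair (B : ℕ) (p q : Polynomial ℂ) (hpm : p.Monic) (hpd : p.natDegree = B)
    (hqm : q.Monic) (hqd : q.natDegree = B)
    (hnoroot : ∀ z : ℂ, ¬(p.eval z = 0 ∧ q.eval z = 0))
    (a b c e : ℂ) (hc : c ≠ 0) (he : e ≠ 0)
    (hdet : a ^ 2 - b ^ 2 = 1) (hec : e * c ^ B = a + b) :
    (C e * (C a * p.comp (C c * X) - C b * q.comp (C c * X))).Monic ∧
    (C e * (C a * p.comp (C c * X) - C b * q.comp (C c * X))).natDegree = B ∧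
    (C e * (-(C b * p.comp (C c * X)) + C a * q.comp (C c * X))).Monic ∧
    (C e * (-(C b * p.comp (C c * X)) + C a * q.comp (C c * X))).natDegree = B ∧
    res (C e * (C a * p.comp (C c * X) - C b * q.comp (C c * X)))
        (C e * (-(C b * p.comp (C c * X)) + C a * q.comp (C c * X)))
      = e ^ B * ((a + b) ^ B * res p q) ∧
    (∀ z : ℂ, ¬((C e * (C a * p.comp (C c * X) - C b * q.comp (C c * X))).eval z = 0 ∧
        (C e * (-(C b * p.comp (C c * X)) + C a * q.comp (C c * X))).eval z = 0)) := by
  set u := p.comp (C c * X) with hu_def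
  set v := q.comp (C c * X) with hv_def
  have hdeg1 : (C c * X : Polynomial ℂ).natDegree = 1 := natDegree_C_mul_X c hc
  have hlcX : (C c * X : Polynomial ℂ).leadingCoeff = c := by
    rw [leadingCoeff_mul, leadingCoeff_C, leadingCoeff_X, mul_one]
  have hud : u.natDegree = B := by rw [hu_def, natDegree_comp, hdeg1, hpd, mul_one]
  have hvd : v.natDegree = B := by rw [hv_def, natDegree_comp, hdeg1, hqd, mul_one]
  have hulc : u.leadingCoeff = c ^ B := by
    rw [hu_def, leadingCoeff_comp (by rw [hdeg1]; norm_num), hpm.leadingCoeff, hlcX, hpd,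
      one_mul]
  have hvlc : v.leadingCoeff = c ^ B := by
    rw [hv_def, leadingCoeff_comp (by rw [hdeg1]; norm_num), hqm.leadingCoeff, hlcX, hqd,
      one_mul]
  have hL : (c : ℂ) ^ B ≠ 0 := pow_ne_zero _ hc
  have hamb : a - b ≠ 0 := by
    intro h; apply one_ne_zero (α := ℂ); rw [← hdet]; linear_combination (a + b) * h
  have hne1 : (a + -b) * c ^ B ≠ 0 := by
    rw [show a + -b = a - b by ring]; exact mul_ne_zero hamb hL
  have hne2 : (-b + a) * c ^ B ≠ 0 := by
    rw [show -b + a = a - b by ring]; exact mul_ne_zero hamb hL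
  have hcomb1 := comb_deg u v B a (-b) (c ^ B) hud hvd hulc hvlc hne1
  have hcomb2 := comb_deg u v B (-b) a (c ^ B) hud hvd hulc hvlc hne2
  have hrw1 : C a * u - C b * v = C a * u + C (-b) * v := by rw [map_neg]; ring
  have hrw2 : -(C b * u) + C a * v = C (-b) * u + C a * v := by rw [map_neg]; ring
  have hFd : (C a * u - C b * v).natDegree = B := by rw [hrw1]; exact hcomb1.1
  have hGd : (-(C b * u) + C a * v).natDegree = B := by rw [hrw2]; exact hcomb2.1
  have hFlc : (C a * u - C b * v).leadingCoeff = (a - b) * c ^ B := by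
    rw [hrw1, hcomb1.2]; ring
  have hGlc : (-(C b * u) + C a * v).leadingCoeff = (a - b) * c ^ B := by
    rw [hrw2, hcomb2.2]; ring
  have hlc1 : e * ((a - b) * c ^ B) = 1 := by linear_combination (a - b) * hec + hdet
  have hFm : (C e * (C a * u - C b * v)).Monic := by
    show (C e * (C a * u - C b * v)).leadingCoeff = 1
    rw [leadingCoeff_mul, leadingCoeff_C, hFlc, hlc1]
  have hGm : (C e * (-(C b * u) + C a * v)).Monic := by
    show (C e * (-(C b * u) + C a * v)).leadingCoeff = 1
    rw [leadingCoeff_mul, leadingCoeff_C, hGlc, hlc1]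
  have hFD : (C e * (C a * u - C b * v)).natDegree = B := by
    rw [natDegree_C_mul he, hFd]
  have hGD : (C e * (-(C b * u) + C a * v)).natDegree = B := by
    rw [natDegree_C_mul he, hGd]
  have hres : res (C e * (C a * u - C b * v)) (C e * (-(C b * u) + C a * v))
      = e ^ B * ((a + b) ^ B * res p q) := by
    have hcF : Multiset.card (C a * u - C b * v).roots = B := by rw [card_roots_eq, hFd]
    unfold res
    rw [roots_C_mul _ he,
      Multiset.map_congr rfl (show ∀ z ∈ (C a * u - C b * v).roots,
        (C e * (-(C b * u) + C a * v)).eval z = e * (-(C b * u) + C a * v).eval z by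
        intro z _; rw [eval_mul, eval_C]),
      prod_map_const_mul, hcF]
    have := res_rot u v B (c ^ B) a b hL hud hvd hulc hvlc hdet
    unfold res at this
    rw [this]
    have h2 := res_comp_scale p q hpm c hc
    unfold res at h2
    rw [h2]
  refine ⟨hFm, hFD, hGm, hGD, hres, ?_⟩
  intro z ⟨h1, h2⟩
  simp only [eval_mul, eval_C, eval_sub, eval_add, eval_neg, hu_def, hv_def, eval_comp,
    eval_X] at h1 h2
  have h1' : a * p.eval (c * z) - b * q.eval (c * z) = 0 :=
    (mul_eq_zero.mp h1).resolve_left he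
  have h2' : -(b * p.eval (c * z)) + a * q.eval (c * z) = 0 :=
    (mul_eq_zero.mp h2).resolve_left he
  refine hnoroot (c * z) ⟨?_, ?_⟩
  · linear_combination a * h1' + b * h2' - p.eval (c * z) * hdet
  · linear_combination b * h1' + a * h2' - q.eval (c * z) * hdet

/-- For `(p,q) ∈ Rat_B` and `α, β ∈ ℝ`, the family `(p_t, q_t)`,
`t ∈ [0,1]`, consists of pairs of monic degree-`B` polynomials with
`Res(p_t,q_t) = e^{-itB(Bα-β)}·Res(p,q) ≠ 0`, so `(p_t,q_t) ∈ Rat_B`; and if `(p,q)`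
has the `(α,β)`-symmetry then `(p_1,q_1) = (p,q)`, so `t ↦ (p_t,q_t)` is a loop in
`Rat_B` based at `(p,q)` along which the resultant traverses
`t ↦ e^{-itB(Bα-β)}·Res(p,q)`. -/
theorem rotated_family_in_ratSpace (B : ℕ) (hB : 1 ≤ B) (α β : ℝ) (p q : Polynomial ℂ)
    (hpm : p.Monic) (hpd : p.natDegree = B) (hqm : q.Monic) (hqd : q.natDegree = B)
    (hnoroot : ∀ z : ℂ, ¬(p.eval z = 0 ∧ q.eval z = 0)) :
    (∀ t ∈ Set.Icc (0:ℝ) 1,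
      (rotNum B α β p q t).Monic ∧ (rotNum B α β p q t).natDegree = B ∧
      (rotDen B α β p q t).Monic ∧ (rotDen B α β p q t).natDegree = B ∧
      res (rotNum B α β p q t) (rotDen B α β p q t)
        = exp (-(I * t * B * (B * α - β))) * res p q ∧
      res (rotNum B α β p q t) (rotDen B α β p q t) ≠ 0 ∧
      ∀ z : ℂ, ¬((rotNum B α β p q t).eval z = 0 ∧ (rotDen B α β p q t).eval z = 0)) ∧
    (RotSymm α β p q → rotNum B α β p q 1 = p ∧ rotDen B α β p q 1 = q) := by
  have hmain : ∀ t : ℝ,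
      (rotNum B α β p q t).Monic ∧ (rotNum B α β p q t).natDegree = B ∧
      (rotDen B α β p q t).Monic ∧ (rotDen B α β p q t).natDegree = B ∧
      res (rotNum B α β p q t) (rotDen B α β p q t)
        = exp (-(I * t * B * (B * α - β))) * res p q ∧
      res (rotNum B α β p q t) (rotDen B α β p q t) ≠ 0 ∧
      ∀ z : ℂ, ¬((rotNum B α β p q t).eval z = 0 ∧ (rotDen B α β p q t).eval z = 0) := by
    intro t
    have hsc : ((Real.sin (t * β / 2) : ℂ)) ^ 2 + ((Real.cos (t * β / 2) : ℂ)) ^ 2 = 1 := by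
      exact_mod_cast congrArg (fun x : ℝ => (x : ℂ)) (Real.sin_sq_add_cos_sq (t * β / 2))
    have hdet : ((Real.cos (t * β / 2) : ℂ)) ^ 2 - (I * Real.sin (t * β / 2)) ^ 2 = 1 := by
      linear_combination hsc - ((Real.sin (t * β / 2) : ℂ)) ^ 2 * I_sq
    have hec : exp (I * t * (β / 2 - B * α)) * exp (I * t * α) ^ B
        = (Real.cos (t * β / 2) : ℂ) + I * Real.sin (t * β / 2) := by
      rw [← Complex.exp_nat_mul, ← Complex.exp_add,
        show I * (t:ℂ) * ((β:ℂ) / 2 - (B:ℂ) * α) + (B:ℂ) * (I * t * α)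
          = ((t * β / 2 : ℝ) : ℂ) * I by push_cast; ring,
        Complex.exp_mul_I, Complex.ofReal_cos, Complex.ofReal_sin]
      ring
    obtain ⟨m1, d1, m2, d2, hres, hnr⟩ := rot_pair B p q hpm hpd hqm hqd hnoroot
      ((Real.cos (t * β / 2) : ℂ)) (I * Real.sin (t * β / 2)) (exp (I * t * α))
      (exp (I * t * (β / 2 - B * α))) (exp_ne_zero _) (exp_ne_zero _) hdet hec
    have hres2 : res (rotNum B α β p q t) (rotDen B α β p q t)
        = exp (-(I * t * B * (B * α - β))) * res p q := by
      show res (C (exp (I * t * (β / 2 - B * α))) *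
          (C (Real.cos (t * β / 2) : ℂ) * p.comp (C (exp (I * t * α)) * X) -
            C (I * Real.sin (t * β / 2)) * q.comp (C (exp (I * t * α)) * X)))
          (C (exp (I * t * (β / 2 - B * α))) *
          (-(C (I * Real.sin (t * β / 2)) * p.comp (C (exp (I * t * α)) * X)) +
            C (Real.cos (t * β / 2) : ℂ) * q.comp (C (exp (I * t * α)) * X)))
        = exp (-(I * t * B * (B * α - β))) * res p q
      rw [hres, ← hec, ← mul_assoc]
      congr 1
      rw [mul_pow, ← pow_mul, ← Complex.exp_nat_mul, ← Complex.exp_nat_mul,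
        ← Complex.exp_add, ← Complex.exp_add]
      congr 1
      push_cast
      ring
    exact ⟨m1, d1, m2, d2, hres2,
      hres2 ▸ mul_ne_zero (exp_ne_zero _) (res_ne_zero p q hnoroot), hnr⟩
  refine ⟨fun t _ => hmain t, fun hsym => ?_⟩
  obtain ⟨hm1, hd1, hm2, hd2, -, -, -⟩ := hmain 1
  set a : ℂ := ((Real.cos (β / 2) : ℂ)) with ha_def
  set b : ℂ := I * Real.sin (β / 2) with hb_def
  set c : ℂ := exp (I * α) with hc_def
  set e : ℂ := exp (I * (β / 2 - B * α)) with he_def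
  have hPe : rotNum B α β p q 1 = C e * (C a * p.comp (C c * X) - C b * q.comp (C c * X)) := by
    unfold rotNum
    norm_num [ha_def, hb_def, hc_def, he_def]
  have hQe : rotDen B α β p q 1
      = C e * (-(C b * p.comp (C c * X)) + C a * q.comp (C c * X)) := by
    unfold rotDen
    norm_num [ha_def, hb_def, hc_def, he_def]
  have hcop : IsCoprime p q := by
    rw [Polynomial.isCoprime_iff_aeval_ne_zero_of_isAlgClosed (k := ℂ) (K := ℂ) p q]
    intro z
    by_contra h
    push_neg at h
    exact hnoroot z ⟨by simpa using h.1, by simpa using h.2⟩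
  have hFqGp : (C a * p.comp (C c * X) - C b * q.comp (C c * X)) * q
      = (-(C b * p.comp (C c * X)) + C a * q.comp (C c * X)) * p := by
    apply Polynomial.funext
    intro z
    have hs := hsym z
    rw [← hc_def] at hs
    simp only [eval_mul, eval_sub, eval_add, eval_neg, eval_C, eval_comp, eval_X]
    linear_combination hs
  obtain ⟨d, hd⟩ : p ∣ (C a * p.comp (C c * X) - C b * q.comp (C c * X)) :=
    hcop.dvd_of_dvd_mul_right ⟨-(C b * p.comp (C c * X)) + C a * q.comp (C c * X),
      by rw [hFqGp]; ring⟩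
  have hGd : -(C b * p.comp (C c * X)) + C a * q.comp (C c * X) = d * q :=
    mul_left_cancel₀ hpm.ne_zero (by linear_combination q * hd - hFqGp)
  have hP1 : rotNum B α β p q 1 = p * (C e * d) := by rw [hPe, hd]; ring
  have hd0 : d ≠ 0 := by
    rintro rfl
    exact hm1.ne_zero (by rw [hP1]; simp)
  have hCed : C e * d ≠ 0 := mul_ne_zero (C_ne_zero.mpr (exp_ne_zero _)) hd0
  have hdeg0 : (C e * d).natDegree = 0 := by
    have h := natDegree_mul hpm.ne_zero hCed
    rw [← hP1, hd1, hpd] at h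
    omega
  have hlc : (C e * d).leadingCoeff = 1 := by
    have h := leadingCoeff_mul p (C e * d)
    rw [← hP1, hm1.leadingCoeff, hpm.leadingCoeff, one_mul] at h
    exact h.symm
  have hone : C e * d = 1 := by
    rw [eq_C_of_natDegree_eq_zero hdeg0,
      show (C e * d).coeff 0 = (C e * d).leadingCoeff by
        rw [Polynomial.leadingCoeff, hdeg0], hlc, C_1]
  constructor
  · rw [hP1, hone, mul_one]
  · rw [hQe, hGd, show C e * (d * q) = q * (C e * d) by ring, hone, mul_one]
end

section
/- Let B ≥ 1 and let (p,q) ∈ Rat_B be arbitrary. For t ∈ [0,1] define p_t = e^{−iπt} ( cos(πt)·p + i sin(πt)·q ) and q_t = e^{−iπt} ( i sin(πt)·p + cos(πt)·q ). Then each (p_t, q_t) is a pair of monic degree-B polynomials lying in Rat_B, (p_0,q_0) = (p_1,q_1) = (p,q), and Res(p_t, q_t) = e^{−2πiBt}·Res(p,q) for all t; in particular, along this loop (which represents a 2π isorotation of the corresponding rational map) the resultant winds exactly −B times around 0. -/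
open Polynomial Complex
open scoped Real

/-- `p_t = e^{-iπt} ( cos(πt)·p + i sin(πt)·q )`: numerator of the 2π isorotation loop. -/
noncomputable def isoNum (p q : Polynomial ℂ) (t : ℝ) : Polynomial ℂ :=
  C (exp (-(I * π * t))) *
    (C (Real.cos (π * t) : ℂ) * p + C (I * Real.sin (π * t)) * q)

/-- `q_t = e^{-iπt} ( i sin(πt)·p + cos(πt)·q )`: denominator of the 2π isorotation loop. -/
noncomputable def isoDen (p q : Polynomial ℂ) (t : ℝ) : Polynomial ℂ :=
  C (exp (-(I * π * t))) *
    (C (I * Real.sin (π * t)) * p + C (Real.cos (π * t) : ℂ) * q)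

/-!
Put `w = e^{-2πit}`. Since `e^{-iθ} cos θ = (1 + e^{-2iθ})/2` and
`e^{-iθ} i sin θ = (1 - e^{-2iθ})/2`, the loop is `(p_t, q_t) = (a p + b q, b p + a q)`
with `a = (1 + w)/2` and `b = (1 - w)/2`. As `a + b = 1`, both stay monic of degree `B`.
The resultant is the Sylvester determinant, and column operations show that
`(p, q) ↦ (a p + b q, b p + a q)` multiplies it by `(a² - b²)^B = w^B`. Hence
`Res(p_t, q_t) = e^{-2πiBt} Res(p, q)`, which never vanishes, and its logarithmic derivative
is the constant `-2πiB`.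
-/

namespace Polynomial

theorem natDegree_C_mul_add_C_mul_le {R : Type*} [Semiring R] {f g : R[X]} {n : ℕ}
    (hf : f.natDegree ≤ n) (hg : g.natDegree ≤ n) (a b : R) :
    (C a * f + C b * g).natDegree ≤ n :=
  natDegree_add_le_of_degree_le ((natDegree_C_mul_le a f).trans hf)
    ((natDegree_C_mul_le b g).trans hg)

theorem monic_C_mul_add_C_mul {R : Type*} [Semiring R] [Nontrivial R] {p q : R[X]} {n : ℕ}
    (hpm : p.Monic) (hpd : p.natDegree = n) (hqm : q.Monic) (hqd : q.natDegree = n) {a b : R}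
    (hab : a + b = 1) :
    (C a * p + C b * q).Monic ∧ (C a * p + C b * q).natDegree = n := by
  have hcoeff : (C a * p + C b * q).coeff n = 1 := by
    rw [coeff_add, coeff_C_mul, coeff_C_mul, ← hpd, hpm.coeff_natDegree, hpd, ← hqd,
      hqm.coeff_natDegree, mul_one, mul_one, hab]
  have hle := natDegree_C_mul_add_C_mul_le hpd.le hqd.le a b
  exact ⟨monic_of_natDegree_le_of_coeff_eq_one n hle hcoeff,
    hle.antisymm (le_natDegree_of_ne_zero (hcoeff ▸ one_ne_zero))⟩

theorem resultant_C_mul_add_C_mul {K : Type*} [Field K] {f g : K[X]} {n : ℕ}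
    (hf : f.natDegree ≤ n) (hg : g.natDegree ≤ n) (a b : K) :
    resultant (C a * f + C b * g) (C b * f + C a * g) n n
      = (a ^ 2 - b ^ 2) ^ n * resultant f g n n := by
  rcases eq_or_ne a 0 with rfl | ha
  · have hsign : ((-1 : K) ^ (n * n)) = (-1) ^ n := by
      rcases Nat.even_or_odd n with h | h
      · rw [h.neg_one_pow, (h.mul_left n).neg_one_pow]
      · rw [(h.mul h).neg_one_pow, h.neg_one_pow]
    rw [map_zero, zero_mul, zero_mul, zero_add, add_zero, resultant_C_mul_left,
      resultant_C_mul_right, resultant_comm g f, hsign]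
    ring
  · set F := C a * f + C b * g
    have hF : F.natDegree ≤ n := natDegree_C_mul_add_C_mul_le hf hg a b
    have hG : C b * f + C a * g = C ((a ^ 2 - b ^ 2) / a) * g + F * C (b / a) := by
      calc C b * f + C a * g
          = C (a * (b / a)) * f + C ((a ^ 2 - b ^ 2) / a + b * (b / a)) * g := by
            congr 3
            · field_simp
            · field_simp; ring
        _ = _ := by simp only [F, C_add, C_mul]; ring
    have hF' : F = C a * f + g * C b := by rw [mul_comm g]
    rw [hG, resultant_add_mul_right _ _ _ _ _ (by simp) hF, resultant_C_mul_right, hF',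
      resultant_add_mul_left _ _ _ _ _ (by simp) hg, resultant_C_mul_left, ← mul_assoc,
      ← mul_pow, div_mul_cancel₀ _ ha]

end Polynomial

theorem res_eq_resultant {p q : ℂ[X]} (hp : p.Monic) (hq : q.Monic) :
    res p q = resultant p q := by
  rw [resultant_eq_prod_roots_sub p q hp hq (IsAlgClosed.splits p) (IsAlgClosed.splits q),
    map_sub_sprod_roots_eq_prod_map_eval _ q hq (IsAlgClosed.splits q), res]

theorem res_ne_zero_iff {p : ℂ[X]} (hp : p ≠ 0) (q : ℂ[X]) :
    res p q ≠ 0 ↔ ∀ z : ℂ, ¬(p.eval z = 0 ∧ q.eval z = 0) := by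
  simp [res, Multiset.prod_eq_zero_iff, mem_roots hp]

theorem res_C_mul_add_C_mul {p q : ℂ[X]} {n : ℕ} (hpm : p.Monic) (hpd : p.natDegree = n)
    (hqm : q.Monic) (hqd : q.natDegree = n) {a b : ℂ} (hab : a + b = 1) :
    res (C a * p + C b * q) (C b * p + C a * q) = (a ^ 2 - b ^ 2) ^ n * res p q := by
  obtain ⟨hPm, hPd⟩ := monic_C_mul_add_C_mul hpm hpd hqm hqd hab
  obtain ⟨hQm, hQd⟩ := monic_C_mul_add_C_mul hpm hpd hqm hqd ((add_comm b a).trans hab)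
  rw [res_eq_resultant hPm hQm, res_eq_resultant hpm hqm, hPd, hQd, hpd, hqd,
    resultant_C_mul_add_C_mul hpd.le hqd.le]

theorem exp_neg_I_mul_mul_cos (z : ℂ) :
    exp (-(I * z)) * cos z = (1 + exp (-(2 * I * z))) / 2 := by
  rw [Complex.cos, mul_div_assoc', mul_add, ← exp_add, ← exp_add]
  ring_nf
  simp

theorem exp_neg_I_mul_mul_I_mul_sin (z : ℂ) :
    exp (-(I * z)) * (I * sin z) = (1 - exp (-(2 * I * z))) / 2 := by
  have h : exp (-(I * z)) * (cos z + I * sin z) = 1 := by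
    rw [mul_comm I (sin z), ← exp_mul_I, ← exp_add]; ring_nf; exact exp_zero
  linear_combination h - exp_neg_I_mul_mul_cos z

theorem isoNum_eq (p q : ℂ[X]) (t : ℝ) :
    isoNum p q t = C ((1 + exp (-(2 * π * I * t))) / 2) * p
      + C ((1 - exp (-(2 * π * I * t))) / 2) * q := by
  rw [isoNum, mul_add, ← mul_assoc, ← mul_assoc, ← C_mul, ← C_mul,
    show (-(2 * π * I * t) : ℂ) = -(2 * I * (π * t)) by ring,
    show (-(I * π * t) : ℂ) = -(I * (π * t)) by ring, ofReal_cos, ofReal_sin, ofReal_mul,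
    exp_neg_I_mul_mul_cos, exp_neg_I_mul_mul_I_mul_sin]

theorem isoDen_eq (p q : ℂ[X]) (t : ℝ) :
    isoDen p q t = C ((1 - exp (-(2 * π * I * t))) / 2) * p
      + C ((1 + exp (-(2 * π * I * t))) / 2) * q := by
  rw [isoDen, mul_add, ← mul_assoc, ← mul_assoc, ← C_mul, ← C_mul,
    show (-(2 * π * I * t) : ℂ) = -(2 * I * (π * t)) by ring,
    show (-(I * π * t) : ℂ) = -(I * (π * t)) by ring, ofReal_cos, ofReal_sin, ofReal_mul,
    exp_neg_I_mul_mul_cos, exp_neg_I_mul_mul_I_mul_sin]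

theorem integral_deriv_exp_mul_div (c r : ℂ) (hr : r ≠ 0) (a b : ℝ) :
    ∫ t in a..b, deriv (fun s : ℝ => exp (c * s) * r) t / (exp (c * t) * r) = (b - a) * c := by
  have hderiv (t : ℝ) : deriv (fun s : ℝ => exp (c * s) * r) t = c * (exp (c * t) * r) := by
    have h : HasDerivAt (fun s : ℝ => exp (c * s) * r) (exp (c * t) * c * r) t := by
      simpa using (((hasDerivAt_id (t : ℂ)).const_mul c).comp_ofReal).cexp.mul_const r
    rw [h.deriv]
    ring
  simp only [hderiv, mul_div_cancel_right₀ _ (mul_ne_zero (exp_ne_zero _) hr),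
    intervalIntegral.integral_const, real_smul, ofReal_sub]

theorem res_isoNum_isoDen {p q : ℂ[X]} {n : ℕ} (hpm : p.Monic) (hpd : p.natDegree = n)
    (hqm : q.Monic) (hqd : q.natDegree = n) (t : ℝ) :
    res (isoNum p q t) (isoDen p q t) = exp (-(2 * π * I * n * t)) * res p q := by
  rw [isoNum_eq, isoDen_eq, res_C_mul_add_C_mul hpm hpd hqm hqd (by ring)]
  congr 1
  calc _ = exp (-(2 * π * I * t)) ^ n := by ring
    _ = _ := by rw [← exp_nat_mul]; ring_nf

theorem isoNum_monic_natDegree {p q : ℂ[X]} {n : ℕ} (hpm : p.Monic) (hpd : p.natDegree = n)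
    (hqm : q.Monic) (hqd : q.natDegree = n) (t : ℝ) :
    (isoNum p q t).Monic ∧ (isoNum p q t).natDegree = n :=
  isoNum_eq p q t ▸ monic_C_mul_add_C_mul hpm hpd hqm hqd (by ring)

theorem isoDen_monic_natDegree {p q : ℂ[X]} {n : ℕ} (hpm : p.Monic) (hpd : p.natDegree = n)
    (hqm : q.Monic) (hqd : q.natDegree = n) (t : ℝ) :
    (isoDen p q t).Monic ∧ (isoDen p q t).natDegree = n :=
  isoDen_eq p q t ▸ monic_C_mul_add_C_mul hpm hpd hqm hqd (by ring)

theorem two_pi_isorotation_loop_general (B : ℕ) (p q : Polynomial ℂ)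
    (hpm : p.Monic) (hpd : p.natDegree = B) (hqm : q.Monic) (hqd : q.natDegree = B)
    (hnoroot : ∀ z : ℂ, ¬(p.eval z = 0 ∧ q.eval z = 0)) :
    (∀ t ∈ Set.Icc (0:ℝ) 1,
      (isoNum p q t).Monic ∧ (isoNum p q t).natDegree = B ∧
      (isoDen p q t).Monic ∧ (isoDen p q t).natDegree = B ∧
      (∀ z : ℂ, ¬((isoNum p q t).eval z = 0 ∧ (isoDen p q t).eval z = 0)) ∧
      res (isoNum p q t) (isoDen p q t) = exp (-(2 * π * I * B * t)) * res p q) ∧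
    (isoNum p q 0 = p ∧ isoDen p q 0 = q ∧ isoNum p q 1 = p ∧ isoDen p q 1 = q) ∧
    1 / (2 * π * I) *
        ∫ t in (0:ℝ)..1,
          deriv (fun s => res (isoNum p q s) (isoDen p q s)) t /
            res (isoNum p q t) (isoDen p q t)
      = -(B : ℂ) := by
  have hres := res_isoNum_isoDen hpm hpd hqm hqd
  have hres0 : res p q ≠ 0 := (res_ne_zero_iff hpm.ne_zero q).2 hnoroot
  refine ⟨fun t _ => ?_, by simp [isoNum_eq, isoDen_eq, exp_neg], ?_⟩
  · obtain ⟨hNm, hNd⟩ := isoNum_monic_natDegree hpm hpd hqm hqd t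
    obtain ⟨hDm, hDd⟩ := isoDen_monic_natDegree hpm hpd hqm hqd t
    refine ⟨hNm, hNd, hDm, hDd, (res_ne_zero_iff hNm.ne_zero _).1 ?_, hres t⟩
    rw [hres t]
    exact mul_ne_zero (exp_ne_zero _) hres0
  · have hexp (t : ℝ) : res (isoNum p q t) (isoDen p q t)
        = exp (-(2 * π * I * B) * t) * res p q := by
      rw [hres t, neg_mul]
    simp only [hexp, integral_deriv_exp_mul_div _ _ hres0, ofReal_one, ofReal_zero, sub_zero,
      one_mul]
    field_simp

/-- For `(p,q) ∈ Rat_B`, the `2π` isorotation loop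
`(p_t, q_t) = (e^{-iπt}(cos(πt) p + i sin(πt) q), e^{-iπt}(i sin(πt) p + cos(πt) q))`
stays in `Rat_B`, is a loop based at `(p,q)`, satisfies
`Res(p_t,q_t) = e^{-2πiBt}·Res(p,q)`, and along it the resultant winds exactly `-B`
times around `0`. -/
theorem two_pi_isorotation_loop (B : ℕ) (hB : 1 ≤ B) (p q : Polynomial ℂ)
    (hpm : p.Monic) (hpd : p.natDegree = B) (hqm : q.Monic) (hqd : q.natDegree = B)
    (hnoroot : ∀ z : ℂ, ¬(p.eval z = 0 ∧ q.eval z = 0)) :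
    (∀ t ∈ Set.Icc (0:ℝ) 1,
      (isoNum p q t).Monic ∧ (isoNum p q t).natDegree = B ∧
      (isoDen p q t).Monic ∧ (isoDen p q t).natDegree = B ∧
      (∀ z : ℂ, ¬((isoNum p q t).eval z = 0 ∧ (isoDen p q t).eval z = 0)) ∧
      res (isoNum p q t) (isoDen p q t) = exp (-(2 * π * I * B * t)) * res p q) ∧
    (isoNum p q 0 = p ∧ isoDen p q 0 = q ∧ isoNum p q 1 = p ∧ isoDen p q 1 = q) ∧
    1 / (2 * π * I) *
        ∫ t in (0:ℝ)..1,
          deriv (fun s => res (isoNum p q s) (isoDen p q s)) t /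
            res (isoNum p q t) (isoDen p q t)
      = -(B : ℂ) :=
  two_pi_isorotation_loop_general B p q hpm hpd hqm hqd hnoroot
end
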